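/- Multi-qubit Pauli twirl with leakage (Lemma 1): fix n ≥ 1. For u : {1,…,n} → {0,1,2,3} and c : {1,…,n} → {1, i, −1, −i}, let U_{u,c} be the 3^n × 3^n matrix with entries (U_{u,c})_{x,y} = ∏_{k=1}^n (M_{u(k),c(k)})_{x_k, y_k} (the n-fold Kronecker product of the matrices M_{u(k),c(k)}). Then for every 3^n × 3^n complex matrix ρ: (1/16^n) ∑_{u} ∑_{c} U_{u,c} ρ U_{u,c}† = P̄(ρ) = ∑_{b ∈ {c,l}^n} tr(Π_b ρ) Π̃_b. -/

import Mathlib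

open Matrix

noncomputable section

/-- The four 2×2 Pauli matrices σ₀ = I, σ₁ = X, σ₂ = Y, σ₃ = Z. -/
def pauli : Fin 4 → Matrix (Fin 2) (Fin 2) ℂ :=
  ![1, !![0, 1; 1, 0], !![0, -Complex.I; Complex.I, 0], !![1, 0; 0, -1]]

/-- The four phases 1, i, −1, −i. -/
def phase (c : Fin 4) : ℂ := Complex.I ^ (c : ℕ)

/-- The 3×3 matrix M_{u,c} whose upper-left 2×2 block is `phase c • pauli u`, whose
(3,3) entry is 1, and whose remaining entries vanish. -/
def pauliLeak (u c : Fin 4) : Matrix (Fin 3) (Fin 3) ℂ :=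
  Matrix.of fun x y =>
    if hx : (x : ℕ) < 2 then
      if hy : (y : ℕ) < 2 then phase c * pauli u ⟨x, hx⟩ ⟨y, hy⟩ else 0
    else
      if (y : ℕ) < 2 then 0 else 1

/-- The n-fold Kronecker product U_{u,c} of the matrices M_{u(k), c(k)}. -/
def pauliLeakKron {n : ℕ} (u c : Fin n → Fin 4) :
    Matrix (Fin n → Fin 3) (Fin n → Fin 3) ℂ :=
  Matrix.of fun x y => ∏ k, pauliLeak (u k) (c k) (x k) (y k)

/-- The projector Π_b associated with a leakage pattern `b : Fin n → Bool`
(`b j = true` meaning that qubit `j` is leaked, i.e. its index equals 2). -/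
def leakProj {n : ℕ} (b : Fin n → Bool) :
    Matrix (Fin n → Fin 3) (Fin n → Fin 3) ℂ :=
  Matrix.diagonal fun k => if ∀ j, (k j = (2 : Fin 3) ↔ b j = true) then 1 else 0

/-- The rank of Π_b, namely 2^{#{j : b j = c}}. -/
def leakProjRank {n : ℕ} (b : Fin n → Bool) : ℕ :=
  2 ^ (Finset.univ.filter fun j => b j = false).card

/-- The twirling projector P̄(ρ) = ∑_b tr(Π_b ρ) Π̃_b. -/
def twirlProj {n : ℕ} (ρ : Matrix (Fin n → Fin 3) (Fin n → Fin 3) ℂ) :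
    Matrix (Fin n → Fin 3) (Fin n → Fin 3) ℂ :=
  ∑ b : Fin n → Bool,
    Matrix.trace (leakProj b * ρ) • ((leakProjRank b : ℂ)⁻¹ • leakProj b)

/-!
Each `U_{u,c}` is a Kronecker product, so the twirl kernel
`∑_{u,c} U_{u,c}[x,a] · conj U_{u,c}[y,b]` factorizes over the qubits. On a single qubit,
averaging over the phase `c` kills the blocks coupling the computational levels with the
leaked level (`∑_c i^c = 0`), while Pauli completeness
`∑_u σ_u[x,a] conj σ_u[y,b] = 2 δ_xy δ_ab` handles the computational block. Hence the
twirl is diagonal, and the weight of `ρ_aa` in entry `(x,x)` is `1 / rank Π_b` when `a`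
and `x` have the same leakage pattern `b`, and `0` otherwise: exactly the entry of `P̄(ρ)`.
-/

open Finset ComplexConjugate

lemma sum_pauli_mul_conj (x a y b : Fin 2) :
    ∑ u, pauli u x a * conj (pauli u y b) = if x = y ∧ a = b then 2 else 0 := by
  fin_cases x <;> fin_cases a <;> fin_cases y <;> fin_cases b <;>
    norm_num [Fin.sum_univ_four, pauli, Complex.ext_iff, Matrix.cons_val_two, Matrix.cons_val_three]

lemma sum_phase : ∑ c, phase c = 0 := by
  simp [Fin.sum_univ_four, phase, pow_succ]

lemma phase_mul_conj (c : Fin 4) : phase c * conj (phase c) = 1 := by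
  rw [Complex.mul_conj, phase, map_pow, Complex.normSq_I, one_pow, Complex.ofReal_one]

@[simp] lemma pauliLeak_castSucc_castSucc (u c : Fin 4) (x a : Fin 2) :
    pauliLeak u c x.castSucc a.castSucc = phase c * pauli u x a := by
  simp [pauliLeak, Fin.is_le]

@[simp] lemma pauliLeak_castSucc_two (u c : Fin 4) (x : Fin 2) :
    pauliLeak u c x.castSucc 2 = 0 := by
  simp [pauliLeak, Fin.is_le]

@[simp] lemma pauliLeak_two_castSucc (u c : Fin 4) (a : Fin 2) :
    pauliLeak u c 2 a.castSucc = 0 := by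
  simp [pauliLeak, Fin.is_le]

@[simp] lemma pauliLeak_two_two (u c : Fin 4) :
    pauliLeak u c 2 2 = 1 := by
  simp [pauliLeak]

@[simp] lemma castSucc_ne_two (i : Fin 2) : i.castSucc ≠ (2 : Fin 3) :=
  Fin.castSucc_ne_last i

@[simp] lemma two_ne_castSucc (i : Fin 2) : (2 : Fin 3) ≠ i.castSucc :=
  (Fin.castSucc_ne_last i).symm

/-- The single-qubit twirl maps `|a⟩⟨b|` to `δ_ab ∑_x twirlWeight x a • |x⟩⟨x|`. -/
def twirlWeight (x a : Fin 3) : ℂ :=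
  if (x = 2 ↔ a = 2) then (if x = 2 then 1 else 2⁻¹) else 0

lemma sum_pauliLeak_mul_conj (x a y b : Fin 3) :
    ∑ u, ∑ c, pauliLeak u c x a * conj (pauliLeak u c y b) =
      16 * if x = y ∧ a = b then twirlWeight x a else 0 := by
  induction x using Fin.lastCases <;> induction a using Fin.lastCases <;>
    induction y using Fin.lastCases <;> induction b using Fin.lastCases
  case last.last.last.last =>
    simp only [Fin.reduceLast]
    norm_num [twirlWeight]
  case last.last.cast.cast => simp [← sum_mul, ← map_sum, sum_phase]
  case cast.cast.last.last => simp [← sum_mul, sum_phase]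
  case cast.cast.cast.cast x a y b =>
    have phase_cancels (u c : Fin 4) :
        phase c * pauli u x a * (conj (phase c) * conj (pauli u y b)) =
          pauli u x a * conj (pauli u y b) := by
      rw [mul_mul_mul_comm, phase_mul_conj, one_mul]
    simp only [pauliLeak_castSucc_castSucc, map_mul, phase_cancels, sum_const, card_univ,
      Fintype.card_fin, nsmul_eq_mul, ← mul_sum, sum_pauli_mul_conj, Fin.castSucc_inj]
    split_ifs <;> norm_num [twirlWeight]
  all_goals simp [twirlWeight]

lemma sum_mul_mul_conjTranspose_apply {ι m l α : Type*} [Fintype ι] [Fintype l]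
    [CommSemiring α] [StarRing α] (U : ι → Matrix m l α) (ρ : Matrix l l α) (x y : m) :
    (∑ i, U i * ρ * (U i)ᴴ) x y = ∑ a, ∑ b, ρ a b * ∑ i, U i x a * star (U i y b) := by
  simp only [Matrix.sum_apply, mul_apply, conjTranspose_apply, sum_mul, mul_sum]
  rw [sum_comm]
  conv_rhs => rw [sum_comm]
  refine sum_congr rfl fun b _ => ?_
  rw [sum_comm]
  refine sum_congr rfl fun a _ => sum_congr rfl fun i _ => ?_
  ring

lemma sum_pauliLeakKron_mul_conj {n : ℕ} (x a y b : Fin n → Fin 3) :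
    ∑ u, ∑ c, pauliLeakKron u c x a * conj (pauliLeakKron u c y b) =
      16 ^ n * if x = y ∧ a = b then ∏ k, twirlWeight (x k) (a k) else 0 := by
  have factor : ∏ k, ∑ u, ∑ c, pauliLeak u c (x k) (a k) * conj (pauliLeak u c (y k) (b k)) =
      ∑ u, ∑ c, pauliLeakKron u c x a * conj (pauliLeakKron u c y b) := by
    simp only [pauliLeakKron, of_apply, map_prod, ← prod_mul_distrib]
    rw [Fintype.prod_sum]
    simp_rw [Fintype.prod_sum]
  rw [← factor]
  simp_rw [sum_pauliLeak_mul_conj]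
  rw [prod_mul_distrib, prod_const, card_univ, Fintype.card_fin, Fintype.prod_ite_zero]
  simp [funext_iff, forall_and]

lemma pauliTwirl_eq_diagonal {n : ℕ} (ρ : Matrix (Fin n → Fin 3) (Fin n → Fin 3) ℂ) :
    ((1 : ℂ) / 16 ^ n) • ∑ u : Fin n → Fin 4, ∑ c : Fin n → Fin 4,
        pauliLeakKron u c * ρ * (pauliLeakKron u c)ᴴ =
      diagonal fun x => ∑ a, (∏ k, twirlWeight (x k) (a k)) * ρ a a := by
  ext x y
  rw [← Fintype.sum_prod_type' fun u c => pauliLeakKron u c * ρ * (pauliLeakKron u c)ᴴ,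
    Matrix.smul_apply, sum_mul_mul_conjTranspose_apply, diagonal_apply]
  simp only [Fintype.sum_prod_type, Complex.star_def, sum_pauliLeakKron_mul_conj]
  rcases eq_or_ne x y with rfl | hxy
  · simp only [true_and, mul_ite, mul_zero, sum_ite_eq, mem_univ, if_true, smul_eq_mul, mul_sum]
    refine sum_congr rfl fun a _ => ?_
    field_simp
  · simp [hxy]

def leakPattern {n : ℕ} (x : Fin n → Fin 3) : Fin n → Bool := fun j => decide (x j = 2)

lemma leakPattern_eq_iff {n : ℕ} (k : Fin n → Fin 3) (b : Fin n → Bool) :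
    leakPattern k = b ↔ ∀ j, (k j = 2 ↔ b j = true) :=
  funext_iff.trans (forall_congr' fun j => by cases b j <;> simp [leakPattern])

lemma leakProj_eq_diagonal {n : ℕ} (b : Fin n → Bool) :
    leakProj b = diagonal fun k => if leakPattern k = b then 1 else 0 := by
  simp only [leakProj, leakPattern_eq_iff]

lemma trace_leakProj_mul {n : ℕ} (b : Fin n → Bool)
    (ρ : Matrix (Fin n → Fin 3) (Fin n → Fin 3) ℂ) :
    trace (leakProj b * ρ) = ∑ a, if leakPattern a = b then ρ a a else 0 := by
  simp [leakProj_eq_diagonal, trace, diagonal_mul]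

lemma prod_twirlWeight {n : ℕ} (x a : Fin n → Fin 3) :
    ∏ k, twirlWeight (x k) (a k) =
      if leakPattern a = leakPattern x then (leakProjRank (leakPattern x) : ℂ)⁻¹ else 0 := by
  have same_pattern : (∀ k, (x k = 2 ↔ a k = 2)) ↔ leakPattern a = leakPattern x := by
    simp [leakPattern, funext_iff, iff_comm]
  simp only [twirlWeight]
  rw [Fintype.prod_ite_zero]
  simp only [same_pattern]
  rw [prod_ite, prod_const_one, one_mul, prod_const, inv_pow]
  simp [leakProjRank, leakPattern]

lemma twirlProj_eq_diagonal {n : ℕ} (ρ : Matrix (Fin n → Fin 3) (Fin n → Fin 3) ℂ) :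
    twirlProj ρ = diagonal fun x => ∑ a, (∏ k, twirlWeight (x k) (a k)) * ρ a a := by
  ext x y
  simp only [twirlProj, trace_leakProj_mul]
  simp only [Matrix.sum_apply, Matrix.smul_apply, leakProj_eq_diagonal, diagonal_apply,
    prod_twirlWeight]
  rcases eq_or_ne x y with rfl | hxy
  · simp only [if_true, smul_eq_mul, mul_ite, mul_one, mul_zero, sum_mul, sum_ite_eq, mem_univ]
    refine sum_congr rfl fun a _ => ?_
    split_ifs <;> ring
  · simp [hxy]

theorem multi_qubit_pauli_twirl (n : ℕ)
    (ρ : Matrix (Fin n → Fin 3) (Fin n → Fin 3) ℂ) :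
    ((1 : ℂ) / 16 ^ n) •
        ∑ u : Fin n → Fin 4, ∑ c : Fin n → Fin 4,
          pauliLeakKron u c * ρ * (pauliLeakKron u c)ᴴ =
      twirlProj ρ := by
  rw [pauliTwirl_eq_diagonal, twirlProj_eq_diagonal]
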